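/- arXiv:1502.04201 — 4 statements merged into one kernel-verified Lean document; each statement's English description precedes it below -/
import Mathlib

section
/- For all a > 0, b ≥ 0, and t ∈ ℝ, the difference d(it) := cos(√(aτ² − b)) − cos(√a · τ) (the restriction of cosh(√(at²+b)) − cosh(√a t) to the imaginary axis t = iτ) satisfies |d(iτ)| ≤ 1 + cosh(b) for all τ ∈ ℝ and d(iτ) = O(1/|τ|) as τ → ±∞. -/
/-!
Write `y = √a τ`, so that `a τ² - b = y² - b`. When `y² ≥ b` both terms are cosines, so the
difference is at most `2`, and since `cos` is `1`-Lipschitz it is at most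
`|y| - √(y² - b) = b / (|y| + √(y² - b)) ≤ b / |y|`. When `y² < b` the first term is
`cosh √c` with `c = b - y² ≤ b`; it is at most `cosh b` if `b ≥ 1` (as `√b ≤ b`), while if
`b < 1` it is at most `cosh 1 ≤ 2` and `cos y ≥ 1 - y² / 2 ≥ 0`.
-/

/-- `cos √x` understood as the entire function `∑ (−1)^k x^k/(2k)!`, which for `x < 0`
equals `cosh √(−x)`. -/
noncomputable def cosSqrt (x : ℝ) : ℝ :=
  if 0 ≤ x then Real.cos (Real.sqrt x) else Real.cosh (Real.sqrt (-x))

open Real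

lemma cosSqrt_of_nonneg {x : ℝ} (hx : 0 ≤ x) : cosSqrt x = cos √x := if_pos hx

lemma cosSqrt_of_neg {x : ℝ} (hx : x < 0) : cosSqrt x = cosh √(-x) := if_neg hx.not_ge

lemma Real.cosh_one_le_two : cosh 1 ≤ 2 := by
  have hexp_neg_one : exp (-1) < 1 := exp_lt_one_iff.2 (by norm_num)
  rw [cosh_eq]
  linarith [exp_one_lt_d9]

lemma cosh_sqrt_sub_cos_le {c : ℝ} (hc : 0 ≤ c) (y : ℝ) :
    cosh √c - cos y ≤ 1 + cosh (c + y ^ 2) := by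
  set b := c + y ^ 2
  have hcb : c ≤ b := le_add_of_nonneg_right (sq_nonneg y)
  rcases le_or_gt 1 b with hb1 | hb1
  · have hsqrt : √c ≤ b :=
      (sqrt_le_sqrt hcb).trans ((sqrt_le_left (by linarith)).2 (by nlinarith))
    have hcosh : cosh √c ≤ cosh b := by
      rw [cosh_le_cosh, abs_of_nonneg (sqrt_nonneg c), abs_of_nonneg (by linarith)]
      exact hsqrt
    linarith [neg_one_le_cos y]
  · have hsqrt : √c ≤ 1 := sqrt_le_one.2 (by linarith)
    have hcosh : cosh √c ≤ cosh 1 := by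
      rw [cosh_le_cosh, abs_of_nonneg (sqrt_nonneg c), abs_one]
      exact hsqrt
    have hcos : 0 ≤ cos y := by nlinarith [one_sub_sq_div_two_le_cos (x := y)]
    linarith [cosh_one_le_two, one_le_cosh b]

lemma abs_cosSqrt_sq_sub_sub_cos_le (b y : ℝ) :
    |cosSqrt (y ^ 2 - b) - cos y| ≤ 1 + cosh b := by
  rcases le_or_gt 0 (y ^ 2 - b) with h | h
  · rw [cosSqrt_of_nonneg h, abs_le]
    constructor <;> linarith [neg_one_le_cos √(y ^ 2 - b), cos_le_one √(y ^ 2 - b),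
      neg_one_le_cos y, cos_le_one y, one_le_cosh b]
  · have hupper := cosh_sqrt_sub_cos_le (sub_nonneg.2 (sub_neg.1 h).le) y
    rw [sub_add_cancel] at hupper
    rw [cosSqrt_of_neg h, neg_sub, abs_le]
    constructor <;> linarith [one_le_cosh √(b - y ^ 2), cos_le_one y]

lemma abs_sub_sqrt_sq_sub_le {b y : ℝ} (hb : 0 ≤ b) (hby : b ≤ y ^ 2) (hy : y ≠ 0) :
    |y| - √(y ^ 2 - b) ≤ b / |y| := by
  have hy_pos : 0 < |y| := abs_pos.2 hy
  have hsq : √(y ^ 2 - b) ^ 2 = y ^ 2 - b := sq_sqrt (by linarith)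
  rw [le_div_iff₀ hy_pos]
  nlinarith [sqrt_nonneg (y ^ 2 - b), sq_abs y]

lemma abs_cosSqrt_sq_sub_sub_cos_le_div {b y : ℝ} (hb : 0 ≤ b) (hby : b ≤ y ^ 2)
    (hy : y ≠ 0) :
    |cosSqrt (y ^ 2 - b) - cos y| ≤ b / |y| := by
  have hsqrt_le : √(y ^ 2 - b) ≤ |y| := by
    rw [← sqrt_sq_eq_abs]
    exact sqrt_le_sqrt (by linarith)
  rw [cosSqrt_of_nonneg (by linarith), ← cos_abs y]
  calc |cos √(y ^ 2 - b) - cos (|y|)| ≤ |√(y ^ 2 - b) - (|y|)| := abs_cos_sub_cos_le _ _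
    _ = |y| - √(y ^ 2 - b) := by rw [abs_sub_comm, abs_of_nonneg (by linarith)]
    _ ≤ b / |y| := abs_sub_sqrt_sq_sub_le hb hby hy

theorem d_bounded_and_decay (a b : ℝ) (ha : 0 < a) (hb : 0 ≤ b) :
    (∀ τ : ℝ, |cosSqrt (a * τ ^ 2 - b) - Real.cos (Real.sqrt a * τ)| ≤ 1 + Real.cosh b) ∧
    (∃ C T : ℝ, ∀ τ : ℝ, T ≤ |τ| →
      |cosSqrt (a * τ ^ 2 - b) - Real.cos (Real.sqrt a * τ)| ≤ C / |τ|) := by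
  have hsq : ∀ τ : ℝ, a * τ ^ 2 = (√a * τ) ^ 2 := fun τ => by
    rw [mul_pow, sq_sqrt ha.le]
  refine ⟨fun τ => hsq τ ▸ abs_cosSqrt_sq_sub_sub_cos_le b _,
    b / √a, √(b / a) + 1, fun τ hτ => ?_⟩
  have hτ : τ ≠ 0 := abs_pos.1 (by linarith [sqrt_nonneg (b / a)])
  have hby : b ≤ (√a * τ) ^ 2 := by
    have : b / a ≤ τ ^ 2 := by
      rw [← sq_abs, ← sqrt_le_left (abs_nonneg τ)]
      linarith
    rw [← hsq, mul_comm]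
    exact (div_le_iff₀ ha).1 this
  have hdecay := abs_cosSqrt_sq_sub_sub_cos_le_div hb hby (mul_ne_zero (sqrt_pos.2 ha).ne' hτ)
  rwa [← hsq, abs_mul, abs_of_pos (sqrt_pos.2 ha), ← div_div] at hdecay
end

section
/- (Main theorem) For every a > 0 and b ≥ 0, the function t ↦ cosh(√(a t² + b)) is exponentially convex on ℝ. -/
/-- A function `f : ℝ → ℝ` is exponentially convex if it is continuous and all the
Hermitian forms `∑_{r,s} f(t_r + t_s) ξ_r conj(ξ_s)` are nonnegative (real). -/
def ExpConvex (f : ℝ → ℝ) : Prop :=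
  Continuous f ∧
    ∀ (N : ℕ), 0 < N → ∀ (t : Fin N → ℝ) (ξ : Fin N → ℂ),
      0 ≤ (∑ r, ∑ s, (f (t r + t s) : ℂ) * ξ r * starRingEnd ℂ (ξ s)).re ∧
      (∑ r, ∑ s, (f (t r + t s) : ℂ) * ξ r * starRingEnd ℂ (ξ s)).im = 0

/-!
Expanding `cosh √(u² + b) = ∑ₖ (u² + b)ᵏ / (2k)!` binomially and collecting the powers of `b`
gives `cosh √(u² + b) = cosh u + ∑ₙ cₙ bⁿ⁺¹ ∫₋₁¹ (1 - x²)ⁿ e^{ux} dx` with `cₙ > 0`: the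
coefficient of `bⁿ⁺¹ u²ᵐ` is matched by the moment `∫₋₁¹ x²ᵐ (1 - x²)ⁿ dx`, computed by parts.
Each summand is a nonnegative mixture of exponentials `u ↦ e^{ux}`, whose Hermitian forms are
`|∑ᵣ e^{tᵣx} ξᵣ|² ≥ 0`, and such forms are stable under rescaling `u = √a t`, sums, integrals
and limits.
-/

open Finset Real
open scoped Nat ComplexOrder

-- In `ComplexOrder`, `0 ≤ z` means that `z` is real and nonnegative.
def ExpPosDef (f : ℝ → ℝ) : Prop :=
  ∀ (N : ℕ) (t : Fin N → ℝ) (ξ : Fin N → ℂ),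
    0 ≤ ∑ r, ∑ s, (f (t r + t s) : ℂ) * ξ r * starRingEnd ℂ (ξ s)

namespace ExpPosDef

variable {f g : ℝ → ℝ}

theorem expConvex (hf : ExpPosDef f) (hc : Continuous f) : ExpConvex f :=
  ⟨hc, fun N _ t ξ => (Complex.nonneg_iff.mp (hf N t ξ)).imp_right Eq.symm⟩

theorem add (hf : ExpPosDef f) (hg : ExpPosDef g) : ExpPosDef (f + g) := fun N t ξ => by
  simpa only [Pi.add_apply, Complex.ofReal_add, add_mul, sum_add_distrib]
    using add_nonneg (hf N t ξ) (hg N t ξ)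

theorem const_mul (hf : ExpPosDef f) {c : ℝ} (hc : 0 ≤ c) : ExpPosDef fun u => c * f u :=
  fun N t ξ => by
    simpa only [Complex.ofReal_mul, mul_assoc, ← mul_sum]
      using mul_nonneg (Complex.zero_le_real.mpr hc) (hf N t ξ)

theorem comp_mul (hf : ExpPosDef f) (c : ℝ) : ExpPosDef fun u => f (c * u) := fun N t ξ => by
  simpa only [mul_add] using hf N (fun r => c * t r) ξ

theorem of_hasSum {ι : Type*} {F : ι → ℝ → ℝ} (hF : ∀ i, ExpPosDef (F i))
    (hf : ∀ u, HasSum (fun i => F i u) (f u)) : ExpPosDef f := fun N t ξ => by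
  have hform : HasSum (fun i => ∑ r, ∑ s, (F i (t r + t s) : ℂ) * ξ r * starRingEnd ℂ (ξ s))
      (∑ r, ∑ s, (f (t r + t s) : ℂ) * ξ r * starRingEnd ℂ (ξ s)) :=
    hasSum_sum fun r _ => hasSum_sum fun s _ =>
      ((Complex.ofRealCLM.hasSum (hf _)).mul_right _).mul_right _
  exact hform.nonneg fun i => hF i N t ξ

theorem intervalIntegral {F : ℝ → ℝ → ℝ} {α β : ℝ} (hαβ : α ≤ β)
    (hF : ∀ x ∈ Set.Icc α β, ExpPosDef (F x)) (hcont : ∀ u, Continuous fun x => F x u) :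
    ExpPosDef fun u => ∫ x in α..β, F x u := fun N t ξ => by
  have hint : ∀ r s, Continuous fun x => (F x (t r + t s) : ℂ) * ξ r * starRingEnd ℂ (ξ s) :=
    fun r s => (Complex.continuous_ofReal.comp (hcont _)).mul continuous_const
      |>.mul continuous_const
  have hform : ∑ r, ∑ s, ((∫ x in α..β, F x (t r + t s) : ℝ) : ℂ) * ξ r * starRingEnd ℂ (ξ s)
      = ∫ x in α..β, ∑ r, ∑ s, (F x (t r + t s) : ℂ) * ξ r * starRingEnd ℂ (ξ s) := by
    rw [intervalIntegral.integral_finsetSum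
      (f := fun r x => ∑ s, (F x (t r + t s) : ℂ) * ξ r * starRingEnd ℂ (ξ s))
      fun r _ => (continuous_finsetSum _ fun s _ => hint r s).intervalIntegrable _ _]
    refine sum_congr rfl fun r _ => ?_
    rw [intervalIntegral.integral_finsetSum fun s _ => (hint r s).intervalIntegrable _ _]
    refine sum_congr rfl fun s _ => ?_
    rw [intervalIntegral.integral_mul_const, intervalIntegral.integral_mul_const,
      intervalIntegral.integral_ofReal]
  rw [hform, intervalIntegral.integral_of_le hαβ]
  exact MeasureTheory.integral_nonneg_of_ae <|
    (MeasureTheory.ae_restrict_of_forall_mem measurableSet_Ioc fun x hx =>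
      hF x (Set.Ioc_subset_Icc_self hx) N t ξ)

end ExpPosDef

theorem expPosDef_exp : ExpPosDef exp := fun N t ξ => by
  have h : ∑ r, ∑ s, (exp (t r + t s) : ℂ) * ξ r * starRingEnd ℂ (ξ s)
      = (∑ r, (exp (t r) : ℂ) * ξ r) * starRingEnd ℂ (∑ s, (exp (t s) : ℂ) * ξ s) := by
    simp only [map_sum, map_mul, Complex.conj_ofReal, sum_mul_sum, Real.exp_add,
      Complex.ofReal_mul]
    exact sum_congr rfl fun r _ => sum_congr rfl fun s _ => by ring
  rw [h, Complex.mul_conj]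
  exact Complex.zero_le_real.mpr (Complex.normSq_nonneg _)

theorem expPosDef_cosh : ExpPosDef cosh := by
  have h : cosh = fun u => 2⁻¹ * exp u + 2⁻¹ * exp (-1 * u) := by
    ext u; rw [Real.cosh_eq]; ring_nf
  rw [h]
  exact (expPosDef_exp.const_mul (by norm_num)).add
    ((expPosDef_exp.comp_mul (-1)).const_mul (by norm_num))

theorem intervalIntegral_eq_zero_of_odd {f : ℝ → ℝ} (hf : ∀ x, f (-x) = -f x) (c : ℝ) :
    ∫ x in -c..c, f x = 0 := by
  have h := intervalIntegral.integral_comp_neg (a := -c) (b := c) f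
  simp only [hf, intervalIntegral.integral_neg, neg_neg] at h
  linarith

theorem hasSum_integral_mul_exp {w : ℝ → ℝ} (hw : Continuous w) (u : ℝ) :
    HasSum (fun j : ℕ => u ^ j / j ! * ∫ x in (-1 : ℝ)..1, x ^ j * w x)
      (∫ x in (-1 : ℝ)..1, w x * exp (u * x)) := by
  simp only [← intervalIntegral.integral_const_mul]
  refine intervalIntegral.hasSum_integral_of_dominated_convergence
    (fun j x => |u| ^ j / j ! * |w x|) (fun j => (by fun_prop : Continuous _).aestronglyMeasurable)
    (fun j => MeasureTheory.ae_of_all _ fun x hx => ?_)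
    (MeasureTheory.ae_of_all _ fun x _ => (summable_pow_div_factorial |u|).mul_right _) ?_
    (MeasureTheory.ae_of_all _ fun x _ => ?_)
  · rw [Set.uIoc_of_le (by norm_num)] at hx
    have hx1 : |x| ≤ 1 := abs_le.mpr ⟨hx.1.le, hx.2⟩
    simp only [norm_mul, norm_div, norm_pow, Real.norm_eq_abs, Nat.abs_cast]
    calc |u| ^ j / j ! * (|x| ^ j * |w x|) = |u| ^ j / j ! * |w x| * |x| ^ j := by ring
      _ ≤ |u| ^ j / j ! * |w x| :=
        mul_le_of_le_one_right (by positivity) (pow_le_one₀ (abs_nonneg x) hx1)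
  · simp only [tsum_mul_right]
    exact (continuous_const.mul hw.abs).intervalIntegrable _ _
  · have h := (NormedSpace.expSeries_div_hasSum_exp (u * x)).mul_right (w x)
    rw [← Real.exp_eq_exp_ℝ] at h
    rw [mul_comm]
    exact h.congr_fun fun j => by rw [mul_pow]; ring

theorem hasSum_integral_mul_exp_of_even {w : ℝ → ℝ} (hw : Continuous w)
    (heven : ∀ x, w (-x) = w x) (u : ℝ) :
    HasSum (fun m : ℕ => u ^ (2 * m) / (2 * m)! * ∫ x in (-1 : ℝ)..1, x ^ (2 * m) * w x)
      (∫ x in (-1 : ℝ)..1, w x * exp (u * x)) := by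
  have hodd : ∀ j ∉ Set.range (fun m : ℕ => 2 * m),
      u ^ j / j ! * ∫ x in (-1 : ℝ)..1, x ^ j * w x = 0 := by
    intro j hj
    have hj : Odd j := Nat.not_even_iff_odd.mp fun ⟨m, hm⟩ => hj ⟨m, by simp only; omega⟩
    rw [intervalIntegral_eq_zero_of_odd (fun x => by rw [heven, hj.neg_pow, neg_mul]),
      mul_zero]
  exact (Function.Injective.hasSum_iff (fun m n h => by simpa using h) hodd).mpr
    (hasSum_integral_mul_exp hw u)

noncomputable def sqMoment (m n : ℕ) : ℝ := ∫ x in (-1 : ℝ)..1, x ^ (2 * m) * (1 - x ^ 2) ^ n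

theorem sqMoment_zero_right (m : ℕ) : sqMoment m 0 = 2 / (2 * m + 1) := by
  have h : (-1 : ℝ) ^ (2 * m + 1) = -1 := Odd.neg_one_pow ⟨m, rfl⟩
  simp only [sqMoment, pow_zero, mul_one, integral_pow, one_pow, h]
  push_cast
  ring

theorem sqMoment_succ_right (m n : ℕ) :
    (2 * m + 1) * sqMoment m (n + 1) = (2 * n + 2) * sqMoment (m + 1) n := by
  have hu : ∀ x ∈ Set.uIcc (-1 : ℝ) 1, HasDerivAt (fun y => (1 - y ^ 2) ^ (n + 1))
      ((n + 1) * (1 - x ^ 2) ^ n * -(2 * x)) x := fun x _ => by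
    simpa using ((hasDerivAt_pow 2 x).const_sub 1).fun_pow (n + 1)
  have hv : ∀ x ∈ Set.uIcc (-1 : ℝ) 1, HasDerivAt (fun y => y ^ (2 * m + 1))
      ((2 * m + 1) * x ^ (2 * m)) x := fun x _ => by
    simpa using hasDerivAt_pow (2 * m + 1) x
  have hparts := intervalIntegral.integral_mul_deriv_eq_deriv_mul hu hv
    ((by fun_prop : Continuous fun x : ℝ => (n + 1) * (1 - x ^ 2) ^ n * -(2 * x)).intervalIntegrable
      _ _)
    ((by fun_prop : Continuous fun x : ℝ => (2 * m + 1) * x ^ (2 * m)).intervalIntegrable _ _)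
  have e1 : ∫ x in (-1 : ℝ)..1, (1 - x ^ 2) ^ (n + 1) * ((2 * m + 1) * x ^ (2 * m))
      = (2 * m + 1) * sqMoment m (n + 1) := by
    rw [sqMoment, ← intervalIntegral.integral_const_mul]
    congr 1; ext x; ring
  have e2 : ∫ x in (-1 : ℝ)..1, (n + 1) * (1 - x ^ 2) ^ n * -(2 * x) * x ^ (2 * m + 1)
      = -((2 * n + 2) * sqMoment (m + 1) n) := by
    rw [sqMoment, ← intervalIntegral.integral_const_mul, ← intervalIntegral.integral_neg]
    congr 1; ext x; ring
  rw [e1, e2] at hparts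
  norm_num at hparts
  linarith

theorem sqMoment_mul_factorial (n : ℕ) : ∀ m : ℕ,
    sqMoment m n * ((2 * (m + n + 1))! * m !) = 4 ^ (n + 1) * n ! * (2 * m)! * (m + n + 1)! := by
  induction n with
  | zero =>
    intro m
    simp only [add_zero, Nat.factorial_zero, sqMoment_zero_right]
    rw [show 2 * (m + 1) = 2 * m + 1 + 1 by ring, Nat.factorial_succ (2 * m + 1),
      Nat.factorial_succ (2 * m), Nat.factorial_succ m]
    push_cast
    field_simp
    ring
  | succ n ih =>
    intro m
    have ih := ih (m + 1)
    rw [show 2 * (m + 1) = 2 * m + 1 + 1 by ring, show m + 1 + n + 1 = m + (n + 1) + 1 by ring,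
      Nat.factorial_succ (2 * m + 1), Nat.factorial_succ (2 * m), Nat.factorial_succ m] at ih
    rw [Nat.factorial_succ n]
    push_cast at ih ⊢
    have hpos : (2 * m + 1 : ℝ) * (m + 1) ≠ 0 := by positivity
    refine mul_left_cancel₀ hpos ?_
    linear_combination ((m + 1) * ((2 * (m + (n + 1) + 1))! : ℝ) * m !) * sqMoment_succ_right m n
      + (2 * n + 2) * ih

theorem HasSum.of_sum_antidiagonal_of_nonneg {A : Type*} [AddCommMonoid A] [HasAntidiagonal A]
    {f : A × A → ℝ} (hf : 0 ≤ f) {a : ℝ} (h : HasSum (fun k => ∑ p ∈ antidiagonal k, f p) a) :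
    HasSum f a := by
  let e := Finset.HasAntidiagonal.sigmaAntidiagonalEquivProd (A := A)
  have hfiber : ∀ k, ∑' p : antidiagonal k, f (e ⟨k, p⟩) = ∑ p ∈ antidiagonal k, f p :=
    fun k => Finset.tsum_subtype _ f
  have hsum : Summable (f ∘ e) := (summable_sigma_of_nonneg fun _ => hf _).mpr
    ⟨fun _ => Summable.of_finite, by simpa only [Function.comp_apply, hfiber] using h.summable⟩
  rw [← e.hasSum_iff, hsum.hasSum_iff, hsum.tsum_sigma]
  simpa only [Function.comp_apply, hfiber] using h.tsum_eq

theorem hasSum_cosh_sqrt {y : ℝ} (hy : 0 ≤ y) :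
    HasSum (fun k : ℕ => y ^ k / (2 * k)!) (cosh √y) :=
  (hasSum_cosh √y).congr_fun fun k => by rw [pow_mul, sq_sqrt hy]

noncomputable def coshSqrtCoeff (b u : ℝ) (p : ℕ × ℕ) : ℝ :=
  (p.1 + p.2).choose p.1 * b ^ p.1 * u ^ (2 * p.2) / (2 * (p.1 + p.2))!

theorem coshSqrtCoeff_nonneg {b : ℝ} (hb : 0 ≤ b) (u : ℝ) : 0 ≤ coshSqrtCoeff b u := fun p => by
  unfold coshSqrtCoeff
  rw [pow_mul]
  positivity

theorem sum_antidiagonal_coshSqrtCoeff (b u : ℝ) (k : ℕ) :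
    ∑ p ∈ antidiagonal k, coshSqrtCoeff b u p = (b + u ^ 2) ^ k / (2 * k)! := by
  rw [(Commute.all b (u ^ 2)).add_pow', sum_div]
  refine sum_congr rfl fun p hp => ?_
  rw [HasAntidiagonal.mem_antidiagonal] at hp
  simp only [coshSqrtCoeff, hp, nsmul_eq_mul, pow_mul]
  ring

-- The part of `cosh √(u² + b)` that is homogeneous of degree `n` in `b`.
noncomputable def coshSqrtTerm (b : ℝ) : ℕ → ℝ → ℝ
  | 0 => cosh
  | n + 1 => fun u => b ^ (n + 1) / (4 ^ (n + 1) * (n + 1)! * n !) *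
      ∫ x in (-1 : ℝ)..1, (1 - x ^ 2) ^ n * exp (u * x)

theorem hasSum_coshSqrtCoeff_row (b u : ℝ) (n : ℕ) :
    HasSum (fun m => coshSqrtCoeff b u (n, m)) (coshSqrtTerm b n u) := by
  cases n with
  | zero => exact (hasSum_cosh u).congr_fun fun m => by simp [coshSqrtCoeff]
  | succ n =>
    refine ((hasSum_integral_mul_exp_of_even (w := fun x => (1 - x ^ 2) ^ n) (by fun_prop)
      (fun x => by rw [neg_sq]) u).mul_left _).congr_fun fun m => ?_
    have hmoment := sqMoment_mul_factorial n m
    have hchoose := Nat.add_choose_mul_factorial_mul_factorial m (n + 1)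
    rw [show m + (n + 1) = m + n + 1 by ring] at hchoose
    change _ = _ * (_ * sqMoment m n)
    rw [eq_div_of_mul_eq (by positivity) hmoment]
    simp only [coshSqrtCoeff, show n + 1 + m = m + n + 1 by ring]
    rw [← hchoose]
    push_cast
    field_simp

theorem hasSum_coshSqrtTerm {b : ℝ} (hb : 0 ≤ b) (u : ℝ) :
    HasSum (fun n => coshSqrtTerm b n u) (cosh √(u ^ 2 + b)) := by
  have hdiag := (hasSum_cosh_sqrt (by positivity : 0 ≤ b + u ^ 2)).congr_fun
    fun k => sum_antidiagonal_coshSqrtCoeff b u k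
  rw [add_comm]
  exact (HasSum.of_sum_antidiagonal_of_nonneg (coshSqrtCoeff_nonneg hb u) hdiag).prod_fiberwise
    (hasSum_coshSqrtCoeff_row b u)

theorem expPosDef_coshSqrtTerm {b : ℝ} (hb : 0 ≤ b) : ∀ n, ExpPosDef (coshSqrtTerm b n)
  | 0 => expPosDef_cosh
  | n + 1 => by
    refine ExpPosDef.const_mul ?_ (by positivity)
    refine ExpPosDef.intervalIntegral (by norm_num) (fun x hx => ?_) fun u => by fun_prop
    have hx2 : 0 ≤ 1 - x ^ 2 := by nlinarith [hx.1, hx.2]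
    simpa only [mul_comm _ x] using (expPosDef_exp.comp_mul x).const_mul (pow_nonneg hx2 n)

theorem cosh_sqrt_expConvex (a b : ℝ) (ha : 0 < a) (hb : 0 ≤ b) :
    ExpConvex (fun t => Real.cosh (Real.sqrt (a * t ^ 2 + b))) := by
  refine ExpPosDef.expConvex ?_ (by fun_prop)
  refine ExpPosDef.of_hasSum (fun n => (expPosDef_coshSqrtTerm hb n).comp_mul √a) fun t => ?_
  simpa only [mul_pow, sq_sqrt ha.le] using hasSum_coshSqrtTerm hb (√a * t)
end

section
/- Fix a > 0, b > 0 and λ ∈ (−√a, 0). The set of points ζ = ξ + iη in ℂ with η ≠ 0, lying off the vertical segment S = {iη : |η| ≤ √(b/a)}, at which Im(√(aζ²+b) + λζ) = 0 (with the branch of √(aζ²+b) positive for large real ζ) is exactly the ellipse ξ²/A² + η²/B² = 1 minus its two real points, where A = √(b/a)·(|λ|/√a)·(1−λ²/a)^{−1/2} and B = √(b/a)·(1−λ²/a)^{−1/2}. Moreover A < B and √(b/a) < B, so S lies inside the ellipse. -/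
/-- The vertical slit `S = {iη : |η| ≤ √(b/a)}`. -/
def slit (a b : ℝ) : Set ℂ :=
  {ζ : ℂ | ζ.re = 0 ∧ |ζ.im| ≤ Real.sqrt (b / a)}

/-- `w` is the single-valued holomorphic branch of `√(aζ² + b)` on `ℂ ∖ S` which is
positive for large real `ζ`. -/
structure IsSqrtBranch (a b : ℝ) (w : ℂ → ℂ) : Prop where
  analytic : AnalyticOn ℂ w (slit a b)ᶜ
  sq : ∀ ζ ∈ (slit a b)ᶜ, w ζ ^ 2 = (a : ℂ) * ζ ^ 2 + b
  posLarge : ∃ M : ℝ, ∀ x : ℝ, M < x → 0 < (w (x : ℂ)).re ∧ (w (x : ℂ)).im = 0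

/-!
Write `w = u + iv` and `ζ = ξ + iη`. Squaring gives `u² - v² = a(ξ² - η²) + b` and `uv = aξη`,
so on the level set `v = -λη` forces `u = -aξ/λ`, and eliminating `u` leaves
`(a - λ²)(aξ² + λ²η²) = bλ²`, which is the ellipse. Conversely, at a point of this ellipse
`-aξ/λ - iλη` is a square root of `aζ² + b`, and it is `w ζ` because the branch satisfies
`η · Im w(ζ) > 0` off the slit: `Im w` has no zero in either half-plane minus the slit (a zero
would put `ζ` on the slit), each of these regions is star-shaped about a point `iτ` with
`aτ² > b`, and the sign is read off at `1 + iτ`, where `Re w > 0` by the same connectedness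
argument on the right half-plane, started from the large positive reals.
-/

open Complex

lemma IsPreconnected.pos_of_ne_zero {X : Type*} [TopologicalSpace X] {U : Set X} {f : X → ℝ}
    (hU : IsPreconnected U) (hf : ContinuousOn f U) (hne : ∀ x ∈ U, f x ≠ 0)
    {x₀ : X} (hx₀ : x₀ ∈ U) (h₀ : 0 < f x₀) {x : X} (hx : x ∈ U) : 0 < f x := by
  by_contra! hle
  obtain ⟨y, hy, hy0⟩ := hU.intermediate_value hx hx₀ hf ⟨hle, h₀.le⟩
  exact hne y hy hy0

lemma mem_slit_iff {a b : ℝ} (ha : 0 < a) (hb : 0 ≤ b) {ζ : ℂ} :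
    ζ ∈ slit a b ↔ ζ.re = 0 ∧ a * ζ.im ^ 2 ≤ b := by
  rw [slit, Set.mem_ofPred_eq, ← Real.sqrt_sq_eq_abs,
    Real.sqrt_le_sqrt_iff (div_nonneg hb ha.le), le_div_iff₀' ha]

lemma lt_mul_add_mul_sq {a b t y α β : ℝ} (ht : b < a * t ^ 2) (hy : b < a * y ^ 2)
    (hty : b < a * (t * y)) (hα : 0 ≤ α) (hβ : 0 < β) (hαβ : α + β = 1) :
    b < a * (α * t + β * y) ^ 2 := by
  have key : a * (α * t + β * y) ^ 2 - b
      = α ^ 2 * (a * t ^ 2 - b) + β ^ 2 * (a * y ^ 2 - b)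
        + 2 * (α * β) * (a * (t * y) - b) := by
    linear_combination b * (α + β + 1) * hαβ
  nlinarith [mul_nonneg (sq_nonneg α) (sub_pos.2 ht).le, mul_pos (pow_pos hβ 2) (sub_pos.2 hy),
    mul_nonneg (mul_nonneg hα hβ.le) (sub_pos.2 hty).le]

lemma starConvex_halfPlane_diff_slit {a b : ℝ} (ha : 0 < a) (hb : 0 ≤ b) {t : ℝ}
    (ht : b < a * t ^ 2) :
    StarConvex ℝ (t * I : ℂ) {ζ : ℂ | ζ ∉ slit a b ∧ 0 < t * ζ.im} := by
  rintro ζ ⟨hζ, htζ⟩ α β hα hβ hαβ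
  rcases hβ.eq_or_lt with rfl | hβ
  · obtain rfl : α = 1 := by linarith
    simpa [mem_slit_iff ha hb, ← sq] using ⟨ht, by nlinarith⟩
  rw [mem_slit_iff ha hb, not_and_or, not_le] at hζ
  have hre : (α • (t * I : ℂ) + β • ζ).re = β * ζ.re := by simp
  have him : (α • (t * I : ℂ) + β • ζ).im = α * t + β * ζ.im := by simp
  simp only [Set.mem_ofPred_eq, mem_slit_iff ha hb, hre, him, not_and_or, not_le]
  refine ⟨?_, by nlinarith [mul_nonneg hα (sq_nonneg t), mul_pos hβ htζ]⟩
  rcases hζ with hξ | hη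
  · exact .inl (mul_ne_zero hβ.ne' hξ)
  · exact .inr (lt_mul_add_mul_sq ht hη (by nlinarith) hα hβ hαβ)

namespace IsSqrtBranch

variable {a b : ℝ} {w : ℂ → ℂ} (hw : IsSqrtBranch a b w) {ζ : ℂ}
include hw

lemma re_sq_sub_im_sq (hζ : ζ ∉ slit a b) :
    (w ζ).re ^ 2 - (w ζ).im ^ 2 = a * (ζ.re ^ 2 - ζ.im ^ 2) + b := by
  have h := congrArg re (hw.sq ζ hζ)
  simp only [pow_two, mul_re, add_re, ofReal_re, ofReal_im] at h
  linarith

lemma re_mul_im (hζ : ζ ∉ slit a b) : (w ζ).re * (w ζ).im = a * (ζ.re * ζ.im) := by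
  have h := congrArg im (hw.sq ζ hζ)
  simp only [pow_two, mul_im, add_im, mul_re, ofReal_re, ofReal_im] at h
  linarith

lemma re_ne_zero (ha : 0 < a) (hb : 0 ≤ b) (hξ : ζ.re ≠ 0) : (w ζ).re ≠ 0 := by
  intro hu
  have hζ : ζ ∉ slit a b := fun h => hξ h.1
  have hη : ζ.im = 0 := by
    have h := hw.re_mul_im hζ
    rw [hu, zero_mul] at h
    simpa [ha.ne', hξ] using h.symm
  have h := hw.re_sq_sub_im_sq hζ
  rw [hu, hη] at h
  have : 0 < a * ζ.re ^ 2 := by positivity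
  nlinarith [sq_nonneg (w ζ).im]

lemma im_ne_zero (ha : 0 < a) (hb : 0 ≤ b) (hζ : ζ ∉ slit a b) (hη : ζ.im ≠ 0) :
    (w ζ).im ≠ 0 := by
  intro hv
  have hξ : ζ.re = 0 := by
    have h := hw.re_mul_im hζ
    rw [hv, mul_zero] at h
    simpa [ha.ne', hη] using h.symm
  have h := hw.re_sq_sub_im_sq hζ
  rw [hv, hξ] at h
  exact hζ ((mem_slit_iff ha hb).2 ⟨hξ, by nlinarith [sq_nonneg (w ζ).re]⟩)

lemma re_pos (ha : 0 < a) (hb : 0 ≤ b) (hξ : 0 < ζ.re) : 0 < (w ζ).re := by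
  obtain ⟨M, hM⟩ := hw.posLarge
  set x₀ : ℝ := max M 0 + 1
  have hx₀ : M < x₀ ∧ 0 < x₀ := ⟨by linarith [le_max_left M 0], by positivity⟩
  have hcont : ContinuousOn (fun z => (w z).re) {z : ℂ | 0 < z.re} :=
    continuous_re.comp_continuousOn (hw.analytic.continuousOn.mono fun z hz h => hz.ne' h.1)
  exact (convex_halfSpace_re_gt 0).isPreconnected.pos_of_ne_zero hcont
    (fun z hz => hw.re_ne_zero ha hb hz.ne') (x₀ := x₀) (by simpa using hx₀.2)
    (hM x₀ hx₀.1).1 hξ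

lemma mul_im_pos (ha : 0 < a) (hb : 0 < b) {t : ℝ} (ht : b < a * t ^ 2) (hζ : ζ ∉ slit a b)
    (htζ : 0 < t * ζ.im) : 0 < t * (w ζ).im := by
  have ht0 : t ≠ 0 := by rintro rfl; linarith
  set U : Set ℂ := {z : ℂ | z ∉ slit a b ∧ 0 < t * z.im}
  have hcenter : (t * I : ℂ) ∈ U := by
    simpa [U, mem_slit_iff ha hb.le, ← sq] using ⟨ht, ht0⟩
  have hU : IsPreconnected U :=
    ((starConvex_halfPlane_diff_slit ha hb.le ht).isPathConnected hcenter).isConnected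
      |>.isPreconnected
  have h₁ : (1 + t * I : ℂ) ∈ U := by
    simpa [U, mem_slit_iff ha hb.le, ← sq] using ht0
  have hu₁ : 0 < (w (1 + t * I)).re := hw.re_pos ha hb.le (by simp)
  have huv₁ : (w (1 + t * I)).re * (t * (w (1 + t * I)).im) = a * t ^ 2 := by
    have h := hw.re_mul_im h₁.1
    simp only [add_re, one_re, re_ofReal_mul, I_re, add_im, one_im, im_ofReal_mul, I_im] at h
    linear_combination t * h
  have hcont : ContinuousOn (fun z => t * (w z).im) U :=
    (continuous_const.mul continuous_im).comp_continuousOn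
      (hw.analytic.continuousOn.mono fun z hz => hz.1)
  have hne : ∀ z ∈ U, t * (w z).im ≠ 0 := fun z hz =>
    mul_ne_zero ht0 (hw.im_ne_zero ha hb.le hz.1 (right_ne_zero_of_mul hz.2.ne'))
  exact hU.pos_of_ne_zero hcont hne h₁ (pos_of_mul_pos_right (huv₁ ▸ by positivity) hu₁.le)
    ⟨hζ, htζ⟩

lemma im_mul_im_pos (ha : 0 < a) (hb : 0 < b) (hζ : ζ ∉ slit a b) (hη : ζ.im ≠ 0) :
    0 < ζ.im * (w ζ).im := by
  -- `t = ζ.im * R` has the sign of `ζ.im` and `a * t ^ 2 ≥ a * ζ.im ^ 2 * R = a * ζ.im ^ 2 + b`.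
  set R := 1 + b / (a * ζ.im ^ 2)
  have hR : 1 < R := lt_add_of_pos_right 1 (by positivity)
  have hη2 : 0 < ζ.im ^ 2 := by positivity
  have haR : a * ζ.im ^ 2 * R = a * ζ.im ^ 2 + b := by
    simp only [R]; field_simp
  have h := hw.mul_im_pos ha hb (t := ζ.im * R) (by nlinarith) hζ (by nlinarith)
  rw [mul_right_comm] at h
  exact pos_of_mul_pos_left h (by linarith)

lemma eq_of_sq_eq (ha : 0 < a) (hb : 0 < b) (hζ : ζ ∉ slit a b) (hη : ζ.im ≠ 0) {z : ℂ}
    (hz : z ^ 2 = a * ζ ^ 2 + b) (hzη : 0 < ζ.im * z.im) : w ζ = z := by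
  rcases sq_eq_sq_iff_eq_or_eq_neg.1 ((hw.sq ζ hζ).trans hz.symm) with h | h
  · exact h
  · have := hw.im_mul_im_pos ha hb hζ hη
    rw [h, neg_im] at this
    linarith

lemma ellipse_of_im_add_mul_eq_zero (hζ : ζ ∉ slit a b) (hη : ζ.im ≠ 0) {lam : ℝ}
    (h : (w ζ + lam * ζ).im = 0) :
    (a - lam ^ 2) * (a * ζ.re ^ 2 + lam ^ 2 * ζ.im ^ 2) = b * lam ^ 2 := by
  have hv : (w ζ).im = -(lam * ζ.im) := by
    simp only [add_im, im_ofReal_mul] at h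
    linarith
  have h1 := hw.re_mul_im hζ
  have h2 := hw.re_sq_sub_im_sq hζ
  rw [hv] at h1 h2
  have hu : (w ζ).re * lam = -(a * ζ.re) := mul_right_cancel₀ hη (by linear_combination -h1)
  linear_combination lam ^ 2 * h2 + (a * ζ.re - (w ζ).re * lam) * hu

lemma im_add_mul_eq_zero_of_ellipse (ha : 0 < a) (hb : 0 < b) (hη : ζ.im ≠ 0) {lam : ℝ}
    (hlam : lam < 0) (h : (a - lam ^ 2) * (a * ζ.re ^ 2 + lam ^ 2 * ζ.im ^ 2) = b * lam ^ 2) :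
    ζ ∉ slit a b ∧ (w ζ + lam * ζ).im = 0 := by
  have hη2 : 0 < ζ.im ^ 2 := by positivity
  have hlam0 : lam ≠ 0 := hlam.ne
  have hζ : ζ ∉ slit a b := by
    rw [mem_slit_iff ha hb.le]
    rintro ⟨hξ, hle⟩
    rw [hξ] at h
    nlinarith [mul_pos (pow_pos (neg_pos.2 hlam) 2) hη2]
  have hw' : w ζ = ⟨-(a * ζ.re / lam), -(lam * ζ.im)⟩ := by
    refine hw.eq_of_sq_eq ha hb hζ hη ?_ ?_
    · apply Complex.ext <;>
        simp only [pow_two, mul_re, mul_im, add_re, add_im, ofReal_re, ofReal_im]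
      · field_simp
        linear_combination h
      · field_simp
        ring
    · nlinarith [mul_pos (neg_pos.2 hlam) hη2]
  refine ⟨hζ, ?_⟩
  rw [hw', add_im, im_ofReal_mul]
  ring

end IsSqrtBranch

lemma div_sq_add_div_sq_eq_one_iff {a b lam A B x y : ℝ} (hb : 0 < b)
    (hlam : lam ≠ 0) (hB : B ^ 2 = b / (a - lam ^ 2))
    (hA : A ^ 2 = lam ^ 2 / a * B ^ 2) :
    x ^ 2 / A ^ 2 + y ^ 2 / B ^ 2 = 1 ↔
      (a - lam ^ 2) * (a * x ^ 2 + lam ^ 2 * y ^ 2) = b * lam ^ 2 := by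
  rw [hA, hB]
  field_simp

theorem level_set_is_ellipse (a b lam : ℝ) (ha : 0 < a) (hb : 0 < b)
    (hlam₁ : -Real.sqrt a < lam) (hlam₂ : lam < 0)
    (w : ℂ → ℂ) (hw : IsSqrtBranch a b w) :
    let A : ℝ := Real.sqrt (b / a) * (|lam| / Real.sqrt a) * (1 - lam ^ 2 / a) ^ (-(1/2 : ℝ))
    let B : ℝ := Real.sqrt (b / a) * (1 - lam ^ 2 / a) ^ (-(1/2 : ℝ))
    {ζ : ℂ | ζ ∉ slit a b ∧ ζ.im ≠ 0 ∧ (w ζ + (lam : ℂ) * ζ).im = 0} =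
      {ζ : ℂ | ζ.re ^ 2 / A ^ 2 + ζ.im ^ 2 / B ^ 2 = 1 ∧ ζ.im ≠ 0} ∧
    A < B ∧ Real.sqrt (b / a) < B := by
  intro A B
  have hlam2 : lam ^ 2 < a :=
    Real.sq_sqrt ha.le ▸ sq_lt_sq' hlam₁ (hlam₂.trans (Real.sqrt_pos.2 ha))
  have hd : 0 < 1 - lam ^ 2 / a := by rwa [sub_pos, div_lt_one ha]
  have hB : B ^ 2 = b / (a - lam ^ 2) := by
    simp only [B, mul_pow, Real.rpow_neg hd.le, inv_pow, ← Real.sqrt_eq_rpow, Real.sq_sqrt hd.le,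
      Real.sq_sqrt (div_pos hb ha).le]
    field_simp
  have hA : A ^ 2 = lam ^ 2 / a * B ^ 2 := by
    simp only [A, B, mul_pow, div_pow, sq_abs, Real.sq_sqrt ha.le]
    ring
  have hBpos : 0 < B := mul_pos (by positivity) (Real.rpow_pos_of_pos hd _)
  refine ⟨?_, ?_, ?_⟩
  · ext ζ
    rw [Set.mem_ofPred_eq, Set.mem_ofPred_eq,
      div_sq_add_div_sq_eq_one_iff hb hlam₂.ne hB hA]
    constructor
    · rintro ⟨hζ, hη, h⟩
      exact ⟨hw.ellipse_of_im_add_mul_eq_zero hζ hη h, hη⟩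
    · rintro ⟨h, hη⟩
      obtain ⟨hζ, h⟩ := hw.im_add_mul_eq_zero_of_ellipse ha hb hη hlam₂ h
      exact ⟨hζ, hη, h⟩
  · rw [← pow_lt_pow_iff_left₀ (by positivity) hBpos.le two_ne_zero, hA]
    exact mul_lt_of_lt_one_left (by positivity) ((div_lt_one ha).2 hlam2)
  · rw [← pow_lt_pow_iff_left₀ (by positivity) hBpos.le two_ne_zero, hB,
      Real.sq_sqrt (div_pos hb ha).le]
    exact div_lt_div_of_pos_left hb (sub_pos.2 hlam2)
      (sub_lt_self a (sq_pos_of_ne_zero hlam₂.ne))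
end

section
/- Fix a > 0, b > 0 and λ ∈ (−√a, 0), and set v(ζ) = Im(√(aζ²+b) + λζ) on ℂ∖S with the branch positive for large real ζ, where S = {iη : |η| ≤ √(b/a)}. Then there exist ε > 0 and R < ∞ such that v(ζ)/Im(ζ) > 0 whenever |ζ| > R and Im ζ ≠ 0, and v(ζ)/Im(ζ) < 0 whenever ζ ∈ ℂ∖S, |ζ| < ε and Im ζ ≠ 0. -/
/-!
Write `u = w + √a ζ` and `f = w - √a ζ`, so that `f u = b` and `u - f = 2√a ζ`. Then
`Im (w + λζ) / Im ζ = ((√a + λ)|u|² - (√a - λ) b) / (|u|² + b)`, so only the size of `|u|²`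
matters. Near `0`, `|u|² ≤ (√(a|ζ|² + b) + √a |ζ|)² → b`. Outside the disc of radius `√(b/a)`,
`|u| = |f|` would force `|u| = |f| = √b` and `2√a |ζ| ≤ |u| + |f| = 2√b`; that region is
connected and contains large real points, where `|u| > |f|`, so `|u| > |f|` throughout it, whence
`|u| ≥ √a |ζ|`.
-/

open Complex Filter Topology

theorem isPreconnected_setOf_lt_norm {R : ℝ} (hR : 0 < R) :
    IsPreconnected {z : ℂ | R < ‖z‖} := by
  have himage : exp '' {z : ℂ | Real.log R < z.re} = {z : ℂ | R < ‖z‖} := by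
    ext z
    constructor
    · rintro ⟨z, hz, rfl⟩
      rwa [Set.mem_ofPred_eq, norm_exp, ← Real.log_lt_iff_lt_exp hR]
    · intro hz
      have hz0 : z ≠ 0 := norm_pos_iff.1 (hR.trans hz)
      exact ⟨log z, by rw [Set.mem_ofPred_eq, log_re]; exact Real.log_lt_log hR hz, exp_log hz0⟩
  rw [← himage]
  exact (convex_halfSpace_re_gt _).isPreconnected.image _ continuous_exp.continuousOn

theorem IsPreconnected.forall_pos_of_forall_ne_zero {X : Type*} [TopologicalSpace X]
    {s : Set X} (hs : IsPreconnected s) {g : X → ℝ} (hg : ContinuousOn g s)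
    (hne : ∀ x ∈ s, g x ≠ 0) {x₀ : X} (hx₀ : x₀ ∈ s) (hpos : 0 < g x₀) :
    ∀ x ∈ s, 0 < g x := by
  intro x hx
  by_contra! hle
  obtain ⟨y, hy, hy0⟩ := hs.intermediate_value hx hx₀ hg ⟨hle, hpos.le⟩
  exact hne y hy hy0

theorem norm_sub_ofReal_lt_norm_add_ofReal {z : ℂ} {t : ℝ} (hz : 0 < z.re) (ht : 0 < t) :
    ‖z - t‖ < ‖z + t‖ := by
  rw [← sq_lt_sq₀ (norm_nonneg _) (norm_nonneg _), Complex.sq_norm, Complex.sq_norm,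
    normSq_apply, normSq_apply]
  simp only [sub_re, add_re, sub_im, add_im, ofReal_re, ofReal_im, sub_zero, add_zero]
  nlinarith [mul_pos hz ht]

theorem lt_mul_sq_of_sqrt_div_lt {a c t : ℝ} (ha : 0 < a) (h : √(c / a) < t) :
    c < a * t ^ 2 := by
  rw [Real.sqrt_lt' ((Real.sqrt_nonneg _).trans_lt h), div_lt_iff₀ ha] at h
  linarith

section SquareRoot

variable {r b : ℝ} {wz ζ : ℂ}

theorem sub_mul_add_eq_of_sq_eq (hsq : wz ^ 2 = (r : ℂ) ^ 2 * ζ ^ 2 + b) :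
    (wz - r * ζ) * (wz + r * ζ) = b := by
  linear_combination hsq

theorem two_mul_mul_norm_le_norm_add_add_norm_sub (hr : 0 ≤ r) :
    2 * (r * ‖ζ‖) ≤ ‖wz + r * ζ‖ + ‖wz - r * ζ‖ :=
  calc 2 * (r * ‖ζ‖) = ‖(wz + r * ζ) - (wz - r * ζ)‖ := by
        rw [show (wz + r * ζ) - (wz - r * ζ) = 2 * r * ζ by ring, norm_mul, norm_mul,
          Complex.norm_two, Complex.norm_of_nonneg hr, mul_assoc]
    _ ≤ ‖wz + r * ζ‖ + ‖wz - r * ζ‖ := norm_sub_le _ _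

theorem im_add_mul_div_im_eq (hb : 0 < b) (hsq : wz ^ 2 = (r : ℂ) ^ 2 * ζ ^ 2 + b)
    (him : ζ.im ≠ 0) (lam : ℝ) :
    (wz + lam * ζ).im / ζ.im =
      ((r + lam) * normSq (wz + r * ζ) - (r - lam) * b) / (normSq (wz + r * ζ) + b) := by
  have hfu := sub_mul_add_eq_of_sq_eq hsq
  set u := wz + r * ζ
  have hu : u ≠ 0 := by
    rintro hu
    rw [hu, mul_zero] at hfu
    exact hb.ne (by exact_mod_cast hfu)
  have hs : 0 < normSq u := normSq_pos.2 hu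
  -- `wz - rζ = b / u = b ū / |u|²`
  have hf_im : (wz - r * ζ).im * normSq u = -b * u.im := by
    rw [← mul_inv_cancel_right₀ hu (wz - r * ζ), hfu, inv_def]
    simp only [mul_im, mul_re, ofReal_re, ofReal_im, conj_re, conj_im]
    field_simp
    ring
  have hsb : 0 < normSq u + b := by linarith
  rw [div_eq_div_iff him hsb.ne']
  simp only [u, sub_im, add_im, mul_im, ofReal_re, ofReal_im, zero_mul, add_zero] at hf_im ⊢
  linear_combination hf_im

theorem norm_sub_ne_norm_add_of_sq_eq (hr : 0 ≤ r) (hb : 0 ≤ b)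
    (hsq : wz ^ 2 = (r : ℂ) ^ 2 * ζ ^ 2 + b) (hζ : b < r ^ 2 * ‖ζ‖ ^ 2) :
    ‖wz - r * ζ‖ ≠ ‖wz + r * ζ‖ := by
  intro heq
  have hprod : ‖wz + r * ζ‖ ^ 2 = b := by
    rw [sq]
    nth_rewrite 1 [← heq]
    rw [← norm_mul, sub_mul_add_eq_of_sq_eq hsq, Complex.norm_of_nonneg hb]
  have := two_mul_mul_norm_le_norm_add_add_norm_sub (wz := wz) (ζ := ζ) hr
  nlinarith [mul_nonneg hr (norm_nonneg ζ)]

theorem sq_mul_sq_norm_le_normSq_add (hr : 0 ≤ r) (h : ‖wz - r * ζ‖ < ‖wz + r * ζ‖) :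
    r ^ 2 * ‖ζ‖ ^ 2 ≤ normSq (wz + r * ζ) := by
  have := two_mul_mul_norm_le_norm_add_add_norm_sub (wz := wz) (ζ := ζ) hr
  rw [← Complex.sq_norm, ← mul_pow]
  exact pow_le_pow_left₀ (by positivity) (by linarith) 2

theorem normSq_add_le_of_sq_eq (hr : 0 ≤ r) (hb : 0 ≤ b)
    (hsq : wz ^ 2 = (r : ℂ) ^ 2 * ζ ^ 2 + b) :
    normSq (wz + r * ζ) ≤ (√(r ^ 2 * ‖ζ‖ ^ 2 + b) + r * ‖ζ‖) ^ 2 := by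
  have hw : ‖wz‖ ≤ √(r ^ 2 * ‖ζ‖ ^ 2 + b) := by
    apply Real.le_sqrt_of_sq_le
    calc ‖wz‖ ^ 2 = ‖(r : ℂ) ^ 2 * ζ ^ 2 + b‖ := by rw [← norm_pow, hsq]
      _ ≤ ‖(r : ℂ) ^ 2 * ζ ^ 2‖ + ‖(b : ℂ)‖ := norm_add_le _ _
      _ = r ^ 2 * ‖ζ‖ ^ 2 + b := by
        rw [norm_mul, norm_pow, norm_pow, Complex.norm_of_nonneg hr, Complex.norm_of_nonneg hb]
  rw [← Complex.sq_norm]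
  gcongr
  calc ‖wz + r * ζ‖ ≤ ‖wz‖ + ‖(r : ℂ) * ζ‖ := norm_add_le _ _
    _ ≤ _ := by rw [norm_mul, Complex.norm_of_nonneg hr]; gcongr

theorem exists_pos_forall_normSq_add_lt (hr : 0 ≤ r) (hb : 0 ≤ b) {c : ℝ} (hbc : b < c) :
    ∃ ε > 0, ∀ wz ζ : ℂ, wz ^ 2 = (r : ℂ) ^ 2 * ζ ^ 2 + b → ‖ζ‖ < ε →
      normSq (wz + r * ζ) < c := by
  have hlim : Tendsto (fun t : ℝ => (√(r ^ 2 * t ^ 2 + b) + r * t) ^ 2) (𝓝 0) (𝓝 b) := by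
    have hcont : Continuous fun t : ℝ => (√(r ^ 2 * t ^ 2 + b) + r * t) ^ 2 := by fun_prop
    simpa [Real.sq_sqrt hb] using hcont.tendsto 0
  obtain ⟨ε, hε, hsmall⟩ := Metric.eventually_nhds_iff.1 (hlim.eventually_lt_const hbc)
  refine ⟨ε, hε, fun wz ζ hsq hζ => (normSq_add_le_of_sq_eq hr hb hsq).trans_lt (hsmall ?_)⟩
  rwa [Real.dist_eq, sub_zero, abs_norm]

end SquareRoot

theorem slit_subset_closedBall (a b : ℝ) : slit a b ⊆ Metric.closedBall 0 √(b / a) := by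
  rintro ζ ⟨hre, him⟩
  rwa [mem_closedBall_zero_iff, ← re_add_im ζ, hre, ofReal_zero, zero_add, norm_mul,
    norm_I, mul_one, norm_real, Real.norm_eq_abs]

theorem notMem_slit_of_sqrt_div_lt_norm {a b : ℝ} {ζ : ℂ} (hζ : √(b / a) < ‖ζ‖) :
    ζ ∉ slit a b :=
  fun hS => (mem_closedBall_zero_iff.1 (slit_subset_closedBall a b hS)).not_gt hζ

namespace IsSqrtBranch

variable {a b : ℝ} {w : ℂ → ℂ}

theorem sq_eq (hw : IsSqrtBranch a b w) (ha : 0 ≤ a) {ζ : ℂ} (hζ : ζ ∉ slit a b) :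
    w ζ ^ 2 = (√a : ℂ) ^ 2 * ζ ^ 2 + b := by
  rw [← ofReal_pow, Real.sq_sqrt ha]
  exact hw.sq ζ hζ

theorem norm_sub_lt_norm_add (hw : IsSqrtBranch a b w) (ha : 0 < a) (hb : 0 < b) :
    ∀ ζ : ℂ, √(b / a) < ‖ζ‖ → ‖w ζ - √a * ζ‖ < ‖w ζ + √a * ζ‖ := by
  set s := {z : ℂ | √(b / a) < ‖z‖}
  have hws : ContinuousOn w s :=
    hw.analytic.continuousOn.mono fun _ hz => notMem_slit_of_sqrt_div_lt_norm hz
  have hg : ContinuousOn (fun z => ‖w z + √a * z‖ - ‖w z - √a * z‖) s := by fun_prop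
  have hne : ∀ z ∈ s, ‖w z + √a * z‖ - ‖w z - √a * z‖ ≠ 0 := by
    intro z hz
    refine sub_ne_zero.2 (norm_sub_ne_norm_add_of_sq_eq (Real.sqrt_nonneg a) hb.le
      (hw.sq_eq ha.le (notMem_slit_of_sqrt_div_lt_norm hz)) ?_).symm
    rw [Real.sq_sqrt ha.le]
    exact lt_mul_sq_of_sqrt_div_lt ha hz
  obtain ⟨M, hM⟩ := hw.posLarge
  set x := max M √(b / a) + 1
  have hx : √(b / a) < x := by grind
  have hxs : (x : ℂ) ∈ s := by
    rwa [Set.mem_ofPred_eq, norm_real, Real.norm_of_nonneg ((Real.sqrt_nonneg _).trans hx.le)]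
  have hpos : ‖w x - √a * x‖ < ‖w x + √a * x‖ := by
    exact_mod_cast norm_sub_ofReal_lt_norm_add_ofReal (hM x (by grind)).1
      (mul_pos (Real.sqrt_pos.2 ha) ((Real.sqrt_nonneg _).trans_lt hx))
  intro ζ hζ
  have hs : IsPreconnected s := isPreconnected_setOf_lt_norm (Real.sqrt_pos.2 (div_pos hb ha))
  exact sub_pos.1 (hs.forall_pos_of_forall_ne_zero hg hne hxs (sub_pos.2 hpos) ζ hζ)

theorem exists_forall_lt_normSq (hw : IsSqrtBranch a b w) (ha : 0 < a) (hb : 0 < b) (c : ℝ) :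
    ∃ R, ∀ ζ : ℂ, R < ‖ζ‖ → ζ ∉ slit a b ∧ c < normSq (w ζ + √a * ζ) := by
  refine ⟨max √(b / a) √(c / a), fun ζ hζ => ?_⟩
  have hζS : √(b / a) < ‖ζ‖ := (le_max_left _ _).trans_lt hζ
  refine ⟨notMem_slit_of_sqrt_div_lt_norm hζS, ?_⟩
  calc c < a * ‖ζ‖ ^ 2 := lt_mul_sq_of_sqrt_div_lt ha ((le_max_right _ _).trans_lt hζ)
    _ = √a ^ 2 * ‖ζ‖ ^ 2 := by rw [Real.sq_sqrt ha.le]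
    _ ≤ normSq (w ζ + √a * ζ) :=
      sq_mul_sq_norm_le_normSq_add (Real.sqrt_nonneg a) (hw.norm_sub_lt_norm_add ha hb ζ hζS)

end IsSqrtBranch

theorem sign_of_v_near_zero_and_infinity (a b lam : ℝ) (ha : 0 < a) (hb : 0 < b)
    (hlam₁ : -Real.sqrt a < lam) (hlam₂ : lam < 0)
    (w : ℂ → ℂ) (hw : IsSqrtBranch a b w) :
    ∃ ε > (0 : ℝ), ∃ R : ℝ,
      (∀ ζ : ℂ, R < ‖ζ‖ → ζ.im ≠ 0 → 0 < (w ζ + (lam : ℂ) * ζ).im / ζ.im) ∧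
      (∀ ζ : ℂ, ζ ∉ slit a b → ‖ζ‖ < ε → ζ.im ≠ 0 →
        (w ζ + (lam : ℂ) * ζ).im / ζ.im < 0) := by
  have hr : 0 < √a + lam := by linarith
  -- `v / Im ζ` has the sign of `normSq (w ζ + √a ζ) - c`
  set c := (√a - lam) * b / (√a + lam)
  have hbc : b < c := by rw [lt_div_iff₀ hr]; nlinarith
  have hden : ∀ ζ, 0 < normSq (w ζ + √a * ζ) + b :=
    fun ζ => add_pos_of_nonneg_of_pos (normSq_nonneg _) hb
  obtain ⟨R, hR⟩ := hw.exists_forall_lt_normSq ha hb c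
  obtain ⟨ε, hε, hε'⟩ := exists_pos_forall_normSq_add_lt (Real.sqrt_nonneg a) hb.le hbc
  refine ⟨ε, hε, R, fun ζ hζ him => ?_, fun ζ hζ hζε him => ?_⟩
  · obtain ⟨hζS, hc⟩ := hR ζ hζ
    rw [div_lt_iff₀ hr] at hc
    rw [im_add_mul_div_im_eq hb (hw.sq_eq ha.le hζS) him]
    exact div_pos (by linarith) (hden ζ)
  · have hsq := hw.sq_eq ha.le hζ
    have hc := hε' _ _ hsq hζε
    rw [lt_div_iff₀ hr] at hc
    rw [im_add_mul_div_im_eq hb hsq him]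
    exact div_neg_of_neg_of_pos (by linarith) (hden ζ)
end
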